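/- Let f : (Fin n → ZMod 2) → ZMod 2 be a Boolean function whose support Ω_f = {w | f w = 1} spans all of Fin n → ZMod 2 over ZMod 2 (so the associated Cayley graph is connected). Then there exists w ∈ Z_2^n with Walsh coefficient W_f(w) = −|Ω_f| if and only if the Walsh spectrum of f is symmetric with respect to 0, i.e. the multiset {W_f(w) : w ∈ Z_2^n} is equal to the multiset {−W_f(w) : w ∈ Z_2^n}. -/

import Mathlib

/-- The Walsh coefficient of a Boolean function `f` at `w`:
`W_f(w) = Σ_{x ∈ Z_2^n} (−1)^{w·x} f(x)`, with `f x` interpreted as `0` or `1` in `ℝ`. -/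
noncomputable def walsh {n : ℕ} (f : (Fin n → ZMod 2) → ZMod 2) (w : Fin n → ZMod 2) : ℝ :=
  ∑ x : Fin n → ZMod 2, (-1 : ℝ) ^ (∑ i, w i * x i).val * ((f x).val : ℝ)

/-!
Writing `W_f(w) = ∑_{x ∈ Ω_f} (-1)^{w·x}`, every coefficient lies in `[-|Ω_f|, |Ω_f|]` and
`W_f(0) = |Ω_f|`. If `W_f(a) = -|Ω_f|`, then `a·x = 1` for every `x ∈ Ω_f`, so translating the
argument by `a` flips each character value on `Ω_f`: `W_f(w + a) = -W_f(w)`, and `w ↦ w + a`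
matches the spectrum with its negative. Conversely, a symmetric spectrum contains `-W_f(0)`.
-/

open Finset

namespace ZMod

lemma val_eq_ite_one (v : ZMod 2) : v.val = if v = 1 then 1 else 0 := by
  fin_cases v <;> rfl

lemma neg_one_pow_val_add {R : Type*} [Ring R] (u v : ZMod 2) :
    (-1 : R) ^ (u + v).val = (-1) ^ u.val * (-1) ^ v.val := by
  rw [val_add, ← neg_one_pow_eq_pow_mod_two (R := R), pow_add]

lemma eq_one_of_neg_one_pow_val_eq_neg_one {v : ZMod 2} (h : (-1 : ℝ) ^ v.val = -1) : v = 1 := by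
  rw [val_eq_ite_one] at h
  split_ifs at h with hv
  · exact hv
  · norm_num at h

end ZMod

section Walsh

variable {n : ℕ} (f : (Fin n → ZMod 2) → ZMod 2)

lemma ncard_support_eq_card_filter :
    {w | f w = 1}.ncard = #{x | f x = 1} := by
  rw [Set.ncard_eq_toFinset_card', Set.toFinset_ofPred]

lemma walsh_eq_sum_support (w : Fin n → ZMod 2) :
    walsh f w = ∑ x with f x = 1, (-1 : ℝ) ^ (w ⬝ᵥ x).val := by
  simp only [walsh, ZMod.val_eq_ite_one, Nat.cast_ite, Nat.cast_one, Nat.cast_zero, mul_ite,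
    mul_one, mul_zero, sum_ite, sum_const_zero, add_zero]
  rfl

lemma walsh_zero : walsh f 0 = ({w | f w = 1}.ncard : ℝ) := by
  simp [walsh_eq_sum_support, ncard_support_eq_card_filter]

variable {f}

lemma dotProduct_eq_one_of_walsh_eq_neg_ncard {a : Fin n → ZMod 2}
    (ha : walsh f a = -({w | f w = 1}.ncard : ℝ)) {x : Fin n → ZMod 2} (hx : f x = 1) :
    a ⬝ᵥ x = 1 := by
  rw [walsh_eq_sum_support, ncard_support_eq_card_filter] at ha
  have hle : ∀ y ∈ ({y | f y = 1} : Finset _), (-1 : ℝ) ≤ (-1) ^ (a ⬝ᵥ y).val := fun y _ => by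
    rcases neg_one_pow_eq_or ℝ (a ⬝ᵥ y).val with h | h <;> norm_num [h]
  have hsum : ∑ y with f y = 1, (-1 : ℝ) = ∑ y with f y = 1, (-1) ^ (a ⬝ᵥ y).val := by
    rw [ha]; simp
  exact ZMod.eq_one_of_neg_one_pow_val_eq_neg_one
    ((sum_eq_sum_iff_of_le hle).1 hsum x (mem_filter.2 ⟨mem_univ x, hx⟩)).symm

lemma walsh_add_eq_neg {a : Fin n → ZMod 2} (ha : ∀ x, f x = 1 → a ⬝ᵥ x = 1)
    (w : Fin n → ZMod 2) : walsh f (w + a) = -walsh f w := by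
  simp only [walsh_eq_sum_support, ← sum_neg_distrib]
  refine sum_congr rfl fun x hx => ?_
  rw [add_dotProduct, ZMod.neg_one_pow_val_add, ha x (mem_filter.mp hx).2, ZMod.val_one, pow_one,
    mul_neg_one]

end Walsh

theorem exists_neg_walsh_iff_spectrum_symmetric_general {n : ℕ}
    (f : (Fin n → ZMod 2) → ZMod 2) :
    (∃ w : Fin n → ZMod 2, walsh f w = -({w : Fin n → ZMod 2 | f w = 1}.ncard : ℝ)) ↔
      (Finset.univ.val.map (walsh f) =
        Finset.univ.val.map (fun w : Fin n → ZMod 2 => -walsh f w)) := by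
  constructor
  · rintro ⟨a, ha⟩
    calc univ.val.map (walsh f)
        = univ.val.map (walsh f ∘ Equiv.addRight a) := by
          rw [← Multiset.map_map, Multiset.map_univ_val_equiv]
      _ = univ.val.map (fun w => -walsh f w) :=
          Multiset.map_congr rfl fun w _ =>
            walsh_add_eq_neg (fun _ => dotProduct_eq_one_of_walsh_eq_neg_ncard ha) w
  · intro hsym
    have hmem : walsh f 0 ∈ univ.val.map (fun w => -walsh f w) :=
      hsym ▸ Multiset.mem_map_of_mem _ (mem_univ 0)
    obtain ⟨w, -, hw⟩ := Multiset.mem_map.mp hmem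
    exact ⟨w, by rw [← walsh_zero, ← hw, neg_neg]⟩

theorem exists_neg_walsh_iff_spectrum_symmetric {n : ℕ}
    (f : (Fin n → ZMod 2) → ZMod 2)
    (hconn : Submodule.span (ZMod 2) {w : Fin n → ZMod 2 | f w = 1} = ⊤) :
    (∃ w : Fin n → ZMod 2, walsh f w = -({w : Fin n → ZMod 2 | f w = 1}.ncard : ℝ)) ↔
      (Finset.univ.val.map (walsh f) =
        Finset.univ.val.map (fun w : Fin n → ZMod 2 => -walsh f w)) :=
  exists_neg_walsh_iff_spectrum_symmetric_general f
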